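/- arXiv:1708.09048 — 6 statements merged into one kernel-verified Lean document; each statement's English description precedes it below -/
import Mathlib

section
/- Suppose (θ₁,θ₂), (γ₁,γ₂) satisfy θ₁−γ₁ ≡ θ₂−γ₂ ≡ 2π/3 or 4π/3 (mod 2π), with all angles in [0,2π), and sin(θ₁+θ₂) = sin(γ₁+γ₂) but (θ₁+θ₂) mod 2π ≠ (γ₁+γ₂) mod 2π. Then {(θ₁+θ₂) mod 2π, (γ₁+γ₂) mod 2π} equals either {7π/6, 11π/6} or {5π/6, π/6}. -/
open Real

/-- If `θ₁−γ₁ ≡ θ₂−γ₂ ≡ 2π/3 (mod 2π)` or `≡ 4π/3 (mod 2π)` (angles in `[0,2π)`),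
and `sin(θ₁+θ₂) = sin(γ₁+γ₂)` but `θ₁+θ₂ ≢ γ₁+γ₂ (mod 2π)`, then the (mod 2π) values of
`θ₁+θ₂` and `γ₁+γ₂` form the pair `{7π/6, 11π/6}` or the pair `{5π/6, π/6}`. -/
theorem stmt_6 (θ₁ θ₂ γ₁ γ₂ : ℝ)
    (hθ₁ : θ₁ ∈ Set.Ico 0 (2 * π)) (hθ₂ : θ₂ ∈ Set.Ico 0 (2 * π))
    (hγ₁ : γ₁ ∈ Set.Ico 0 (2 * π)) (hγ₂ : γ₂ ∈ Set.Ico 0 (2 * π))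
    (hcong : ((∃ k : ℤ, θ₁ - γ₁ = 2 * π / 3 + 2 * π * k) ∧
              (∃ k : ℤ, θ₂ - γ₂ = 2 * π / 3 + 2 * π * k)) ∨
             ((∃ k : ℤ, θ₁ - γ₁ = 4 * π / 3 + 2 * π * k) ∧
              (∃ k : ℤ, θ₂ - γ₂ = 4 * π / 3 + 2 * π * k)))
    (hsin : Real.sin (θ₁ + θ₂) = Real.sin (γ₁ + γ₂))
    (hne : ¬ ∃ k : ℤ, θ₁ + θ₂ - (γ₁ + γ₂) = 2 * π * k) :
    ((∃ k : ℤ, θ₁ + θ₂ = 7 * π / 6 + 2 * π * k) ∧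
     (∃ k : ℤ, γ₁ + γ₂ = 11 * π / 6 + 2 * π * k)) ∨
    ((∃ k : ℤ, θ₁ + θ₂ = 11 * π / 6 + 2 * π * k) ∧
     (∃ k : ℤ, γ₁ + γ₂ = 7 * π / 6 + 2 * π * k)) ∨
    ((∃ k : ℤ, θ₁ + θ₂ = 5 * π / 6 + 2 * π * k) ∧
     (∃ k : ℤ, γ₁ + γ₂ = π / 6 + 2 * π * k)) ∨
    ((∃ k : ℤ, θ₁ + θ₂ = π / 6 + 2 * π * k) ∧
     (∃ k : ℤ, γ₁ + γ₂ = 5 * π / 6 + 2 * π * k)) := by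
  rcases Real.sin_eq_sin_iff.mp hsin with ⟨k, hk | hk⟩
  · exact absurd ⟨-k, by push_cast; linarith⟩ hne
  · rcases hcong with ⟨⟨a, ha⟩, ⟨b, hb⟩⟩ | ⟨⟨a, ha⟩, ⟨b, hb⟩⟩
    · rcases Int.even_or_odd (a + b + k) with ⟨m, hm⟩ | ⟨m, hm⟩
      · have hm' : (a : ℝ) + b + k = m + m := by exact_mod_cast congrArg (Int.cast : ℤ → ℝ) hm
        exact Or.inl ⟨⟨m, by push_cast; linear_combination ha/2 + hb/2 + hk/2 + π * hm'⟩,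
          ⟨m - a - b - 1, by push_cast; linear_combination hk/2 - ha/2 - hb/2 + π * hm'⟩⟩
      · have hm' : (a : ℝ) + b + k = 2 * m + 1 := by
          exact_mod_cast congrArg (Int.cast : ℤ → ℝ) hm
        exact Or.inr (Or.inr (Or.inr ⟨⟨m + 1, by push_cast; linear_combination ha/2 + hb/2 + hk/2 + π * hm'⟩,
          ⟨m - a - b, by push_cast; linear_combination hk/2 - ha/2 - hb/2 + π * hm'⟩⟩))
    · rcases Int.even_or_odd (a + b + k) with ⟨m, hm⟩ | ⟨m, hm⟩
      · have hm' : (a : ℝ) + b + k = m + m := by exact_mod_cast congrArg (Int.cast : ℤ → ℝ) hm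
        exact Or.inr (Or.inl ⟨⟨m, by push_cast; linear_combination ha/2 + hb/2 + hk/2 + π * hm'⟩,
          ⟨m - a - b - 1, by push_cast; linear_combination hk/2 - ha/2 - hb/2 + π * hm'⟩⟩)
      · have hm' : (a : ℝ) + b + k = 2 * m + 1 := by
          exact_mod_cast congrArg (Int.cast : ℤ → ℝ) hm
        exact Or.inr (Or.inr (Or.inl ⟨⟨m + 1, by push_cast; linear_combination ha/2 + hb/2 + hk/2 + π * hm'⟩,
          ⟨m - a - b, by push_cast; linear_combination hk/2 - ha/2 - hb/2 + π * hm'⟩⟩))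
end

section
/- On the unit ball B ⊂ ℂⁿ⁻¹ the hemispherical chart is a Darboux chart: for ψ(z₁,...,zₙ₋₁) = [z₁ : ... : zₙ₋₁ : √(1−|z|²)] ∈ ℂPⁿ⁻¹, the pullback ψ*(ω_FS) of the Fubini-Study form equals the standard symplectic form ω₀ = Σᵢ dxᵢ∧dyᵢ on B. -/
/-- The hemispherical chart `ψ(z) = [z₁:...:zₘ:√(1−|z|²)]` of `ℂPᵐ` is a
Darboux chart: `ψ*(ω_FS) = ω₀ = Σdxᵢ∧dyᵢ` on the unit ball `B ⊂ ℂᵐ`. Concretely, since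
`i*(ω₀) = π*(ω_FS)` for the Hopf map `π` and `ψ = π ∘ s` with section
`s(z) = (z, √(1−|z|²)) ∈ S^{2m+1} ⊂ ℂ^{m+1}`, the claim is that the pullback of the
standard symplectic form `ω₀` of `ℂ^{m+1}` by `s` equals `ω₀` on `ℂᵐ`:
`ω₀(Ds(z)u, Ds(z)v) = ω₀(u,v)` for all `z ∈ B` and `u, v ∈ ℂᵐ`. -/
theorem stmt_10 (m : ℕ)
    (s : (Fin m → ℂ) → (Fin (m + 1) → ℂ))
    (hs : ∀ z i, s z i = if h : (i : ℕ) < m then z ⟨i, h⟩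
        else ((Real.sqrt (1 - ∑ k, Complex.normSq (z k)) : ℝ) : ℂ))
    (z : Fin m → ℂ) (hz : ∑ k, Complex.normSq (z k) < 1)
    (u v : Fin m → ℂ) :
    ∑ i, (((fderiv ℝ s z) u i).re * ((fderiv ℝ s z) v i).im
        - ((fderiv ℝ s z) u i).im * ((fderiv ℝ s z) v i).re)
      = ∑ k, ((u k).re * (v k).im - (u k).im * (v k).re) := by
  -- differentiability of the inner function
  have hf : HasFDerivAt (fun z : Fin m → ℂ => 1 - ∑ k, Complex.normSq (z k))
      (fderiv ℝ (fun z : Fin m → ℂ => 1 - ∑ k, Complex.normSq (z k)) z) z := by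
    apply DifferentiableAt.hasFDerivAt
    apply DifferentiableAt.const_sub
    apply DifferentiableAt.fun_sum
    intro k _
    have : (fun z : Fin m → ℂ => Complex.normSq (z k)) =
        fun z : Fin m → ℂ => (z k).re ^ 2 + (z k).im ^ 2 := by
      funext w; simp [Complex.normSq_apply, sq]
    rw [this]
    have hre : DifferentiableAt ℝ (fun w : Fin m → ℂ => (w k).re) z :=
      Complex.reCLM.differentiableAt.comp z
        ((ContinuousLinearMap.proj k : (Fin m → ℂ) →L[ℝ] ℂ).differentiableAt)
    have him : DifferentiableAt ℝ (fun w : Fin m → ℂ => (w k).im) z :=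
      Complex.imCLM.differentiableAt.comp z
        ((ContinuousLinearMap.proj k : (Fin m → ℂ) →L[ℝ] ℂ).differentiableAt)
    exact (hre.pow 2).add (him.pow 2)
  set Dg := fderiv ℝ (fun z : Fin m → ℂ => 1 - ∑ k, Complex.normSq (z k)) z
  have hne : (1 - ∑ k, Complex.normSq (z k)) ≠ 0 := by linarith
  have hsqrt : HasFDerivAt (fun z : Fin m → ℂ => Real.sqrt (1 - ∑ k, Complex.normSq (z k)))
      ((1 / (2 * Real.sqrt (1 - ∑ k, Complex.normSq (z k)))) • Dg) z :=
    (Real.hasDerivAt_sqrt hne).comp_hasFDerivAt z hf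
  set c : ℝ := 1 / (2 * Real.sqrt (1 - ∑ k, Complex.normSq (z k)))
  set L : (Fin m → ℂ) →L[ℝ] (Fin (m+1) → ℂ) :=
    ContinuousLinearMap.pi (fun i => if h : (i : ℕ) < m then ContinuousLinearMap.proj ⟨i, h⟩
      else Complex.ofRealCLM.comp (c • Dg)) with hL
  have hD : HasFDerivAt s L z := by
    apply hasFDerivAt_pi''
    intro i
    have hcoord : (fun x => s x i) = fun x : Fin m → ℂ =>
        if h : (i : ℕ) < m then x ⟨i, h⟩
        else ((Real.sqrt (1 - ∑ k, Complex.normSq (x k)) : ℝ) : ℂ) := by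
      funext x; exact hs x i
    have hproj : (ContinuousLinearMap.proj i).comp L =
        (if h : (i : ℕ) < m then ContinuousLinearMap.proj ⟨i, h⟩
          else Complex.ofRealCLM.comp (c • Dg)) := by
      ext w
      simp [hL]
    rw [hcoord, hproj]
    by_cases h : (i : ℕ) < m
    · simp only [dif_pos h]
      exact hasFDerivAt_apply (𝕜 := ℝ) ⟨i, h⟩ z
    · simp only [dif_neg h]
      exact Complex.ofRealCLM.hasFDerivAt.comp z hsqrt
  rw [hD.fderiv]
  rw [Fin.sum_univ_castSucc]
  have hlast : ∀ w : Fin m → ℂ, (L w (Fin.last m)).im = 0 := by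
    intro w
    simp [hL, ContinuousLinearMap.pi_apply, Fin.last]
  have hcast : ∀ (w : Fin m → ℂ) (j : Fin m), L w (Fin.castSucc j) = w j := by
    intro w j
    simp [hL, ContinuousLinearMap.pi_apply, Fin.castSucc, Fin.is_lt]
  simp [hlast, hcast]
end

section
/- The transition maps of the hemispherical trivializations preserve the connection form: with τⱼ = −Σ_{i≠j}(xᵢdyᵢ − yᵢdxᵢ) and the transition map Ψₖⱼ of the Hopf bundle trivializations, one has Ψₖⱼ*((1/2)(dt − τₖ)) = (1/2)(dt − τⱼ) on (Bⱼ∖{zₖ=0}) × S¹. -/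
/-!
The form `x dy − y dx = Im (w̄ dw)` turns products into weighted sums: on `w = a u` it is
`|u|² (x dy − y dx)(a) + |a|² (x dy − y dx)(u)`.
Off the `j`- and `k`-slots the transition map multiplies each coordinate by the unit
`u = z̄ₖ/|zₖ| = e^{-iθₖ}`, whose angular form is `−dθₖ`; the `j`-slot is `u` times the real height
`√(1 − Σ|zᵢ|²)`, whose angular form vanishes. The coefficients of `−dθₖ` thus add up to
`Σ_{i≠j,k} |zᵢ|² + (1 − Σ_{i≠j} |zᵢ|²) = 1 − |zₖ|²`; with the term `|zₖ|² dθₖ` that the old form has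
in the `k`-slot, the total change is `−dθₖ`, which the shift `t ↦ t + θₖ` cancels.
-/
open Complex ComplexConjugate Finset

def angularForm (w dw : ℂ) : ℝ := w.re * dw.im - w.im * dw.re

lemma angularForm_mul (a a' u u' : ℂ) :
    angularForm (a * u) (a' * u + a * u') =
      normSq u * angularForm a a' + normSq a * angularForm u u' := by
  simp only [angularForm, normSq_apply, mul_re, mul_im, add_re, add_im]; ring

lemma angularForm_ofReal (c c' : ℝ) : angularForm c c' = 0 := by
  simp [angularForm]

lemma angularForm_conj_conj (w dw : ℂ) : angularForm (conj w) (conj dw) = -angularForm w dw := by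
  simp only [angularForm, conj_re, conj_im]; ring

noncomputable def conjPhase (x : ℂ) : ℂ := conj x / (‖x‖ : ℂ)

lemma conjPhase_eq_conj_mul_inv_norm : conjPhase = fun x => conj x * ((‖x‖⁻¹ : ℝ) : ℂ) := by
  funext x; simp [conjPhase, div_eq_mul_inv]

lemma normSq_conjPhase {x : ℂ} (hx : x ≠ 0) : normSq (conjPhase x) = 1 := by
  rw [conjPhase, map_div₀, normSq_conj, normSq_ofReal, normSq_eq_norm_sq]
  field_simp

lemma hasFDerivAt_conjPhase {x : ℂ} (hx : x ≠ 0) :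
    HasFDerivAt conjPhase ((conj x : ℂ) • (ofRealCLM.comp (fderiv ℝ (fun y : ℂ => ‖y‖⁻¹) x)) +
      ((‖x‖⁻¹ : ℝ) : ℂ) • conjCLE.toContinuousLinearMap) x := by
  have hg : DifferentiableAt ℝ (fun y : ℂ => ‖y‖⁻¹) x :=
    (differentiableAt_id.norm ℝ hx).inv (norm_ne_zero_iff.2 hx)
  rw [conjPhase_eq_conj_mul_inv_norm]
  exact (conjCLE.toContinuousLinearMap.hasFDerivAt (x := x)).mul
    (ofRealCLM.hasFDerivAt.comp x hg.hasFDerivAt)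

lemma angularForm_conjPhase_fderiv {x : ℂ} (hx : x ≠ 0) (h : ℂ) :
    angularForm (conjPhase x) (fderiv ℝ conjPhase x h) = -angularForm x h / normSq x := by
  rw [(hasFDerivAt_conjPhase hx).fderiv]
  simp only [add_apply, smul_apply, ContinuousLinearMap.comp_apply, ofRealCLM_apply,
    ContinuousLinearEquiv.coe_coe, conjCLE_apply, smul_eq_mul, conjPhase_eq_conj_mul_inv_norm]
  rw [add_comm, mul_comm _ (conj h), angularForm_mul, angularForm_ofReal, mul_zero, add_zero,
    angularForm_conj_conj, normSq_ofReal, normSq_eq_norm_sq x]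
  field_simp

lemma differentiableAt_conjPhase {x : ℂ} (hx : x ≠ 0) : DifferentiableAt ℝ conjPhase x :=
  (hasFDerivAt_conjPhase hx).differentiableAt

section Transition

variable {n : ℕ} {j k i : Fin n} {z : Fin n → ℂ}

noncomputable def hemisphereHeight (j : Fin n) (z : Fin n → ℂ) : ℝ :=
  √(1 - ∑ p ∈ univ.erase j, normSq (z p))

noncomputable def transitionMap (j k : Fin n) (z : Fin n → ℂ) : Fin n → ℂ := fun i =>
  if i = k then 0
  else if i = j then conjPhase (z k) * hemisphereHeight j z
  else z i * conjPhase (z k)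

lemma hemisphereHeight_sq (hz : ∑ p ∈ univ.erase j, normSq (z p) < 1) :
    hemisphereHeight j z ^ 2 = 1 - ∑ p ∈ univ.erase j, normSq (z p) :=
  Real.sq_sqrt (by linarith)

lemma differentiableAt_hemisphereHeight (hz : ∑ p ∈ univ.erase j, normSq (z p) < 1) :
    DifferentiableAt ℝ (hemisphereHeight j) z := by
  have hnormSq (p : Fin n) : DifferentiableAt ℝ (fun y : Fin n → ℂ => normSq (y p)) z := by
    simpa only [normSq_eq_norm_sq] using (differentiableAt_apply p z).norm_sq ℝ
  exact ((DifferentiableAt.fun_sum fun p _ => hnormSq p).const_sub 1).sqrt (by linarith)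

lemma transitionMap_apply_of_ne (hik : i ≠ k) (hij : i ≠ j) :
    (fun y => transitionMap j k y i) = fun y => y i * conjPhase (y k) := by
  simp [transitionMap, hik, hij]

lemma transitionMap_apply_self (hjk : j ≠ k) :
    (fun y => transitionMap j k y j) = fun y => conjPhase (y k) * hemisphereHeight j y := by
  simp [transitionMap, hjk]

lemma hasFDerivAt_conjPhase_apply (hzk : z k ≠ 0) :
    HasFDerivAt (fun y : Fin n → ℂ => conjPhase (y k))
      ((fderiv ℝ conjPhase (z k)).comp (ContinuousLinearMap.proj k)) z :=
  (differentiableAt_conjPhase hzk).hasFDerivAt.comp (g := conjPhase) z (hasFDerivAt_apply k z)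

lemma differentiableAt_transitionMap_apply (hzk : z k ≠ 0)
    (hz : ∑ p ∈ univ.erase j, normSq (z p) < 1) (i : Fin n) :
    DifferentiableAt ℝ (fun y => transitionMap j k y i) z := by
  have hu := (hasFDerivAt_conjPhase_apply hzk).differentiableAt
  by_cases hik : i = k
  · simp [transitionMap, hik]
  by_cases hij : i = j
  · subst hij
    rw [transitionMap_apply_self hik]
    exact hu.fun_mul (ofRealCLM.differentiableAt.comp z (differentiableAt_hemisphereHeight hz))
  · rw [transitionMap_apply_of_ne hik hij]
    exact (differentiableAt_apply i z).fun_mul hu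

lemma fderiv_transitionMap_apply (hzk : z k ≠ 0)
    (hz : ∑ p ∈ univ.erase j, normSq (z p) < 1) (v : Fin n → ℂ) (i : Fin n) :
    fderiv ℝ (transitionMap j k) z v i = fderiv ℝ (fun y => transitionMap j k y i) z v := by
  rw [fderiv_pi (differentiableAt_transitionMap_apply hzk hz)]
  rfl

lemma angularForm_transitionMap_of_ne (hik : i ≠ k) (hij : i ≠ j) (hzk : z k ≠ 0)
    (hz : ∑ p ∈ univ.erase j, normSq (z p) < 1) (v : Fin n → ℂ) :
    angularForm (transitionMap j k z i) (fderiv ℝ (transitionMap j k) z v i) =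
      angularForm (z i) (v i) - normSq (z i) * angularForm (z k) (v k) / normSq (z k) := by
  have hT := (hasFDerivAt_apply i z).fun_mul (hasFDerivAt_conjPhase_apply hzk)
  rw [fderiv_transitionMap_apply hzk hz, transitionMap_apply_of_ne hik hij, hT.fderiv]
  simp only [transitionMap, if_neg hik, if_neg hij, add_apply, smul_apply,
    ContinuousLinearMap.comp_apply, ContinuousLinearMap.proj_apply, smul_eq_mul]
  rw [add_comm, mul_comm (conjPhase _), angularForm_mul, normSq_conjPhase hzk,
    angularForm_conjPhase_fderiv hzk]
  ring

lemma angularForm_transitionMap_self (hjk : j ≠ k) (hzk : z k ≠ 0)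
    (hz : ∑ p ∈ univ.erase j, normSq (z p) < 1) (v : Fin n → ℂ) :
    angularForm (transitionMap j k z j) (fderiv ℝ (transitionMap j k) z v j) =
      -(1 - ∑ p ∈ univ.erase j, normSq (z p)) * angularForm (z k) (v k) / normSq (z k) := by
  have hT : HasFDerivAt (fun y => conjPhase (y k) * (hemisphereHeight j y : ℂ)) _ z :=
    (hasFDerivAt_conjPhase_apply hzk).fun_mul
      (ofRealCLM.hasFDerivAt.comp z (differentiableAt_hemisphereHeight hz).hasFDerivAt)
  rw [fderiv_transitionMap_apply hzk hz, transitionMap_apply_self hjk, hT.fderiv]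
  simp only [transitionMap, if_neg hjk, if_true, add_apply, smul_apply,
    ContinuousLinearMap.comp_apply, ContinuousLinearMap.proj_apply, smul_eq_mul, ofRealCLM_apply]
  rw [add_comm, mul_comm (hemisphereHeight j z : ℂ), angularForm_mul, angularForm_ofReal,
    normSq_ofReal, angularForm_conjPhase_fderiv hzk, ← sq, hemisphereHeight_sq hz]
  ring

lemma sum_angularForm_transitionMap (hjk : j ≠ k) (hzk : z k ≠ 0)
    (hz : ∑ p ∈ univ.erase j, normSq (z p) < 1) (v : Fin n → ℂ) :
    ∑ i ∈ univ.erase k, angularForm (transitionMap j k z i) (fderiv ℝ (transitionMap j k) z v i) =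
      ∑ i ∈ univ.erase j, angularForm (z i) (v i) - angularForm (z k) (v k) / normSq (z k) := by
  have hj : j ∈ univ.erase k := mem_erase.2 ⟨hjk, mem_univ j⟩
  have hk : k ∈ univ.erase j := mem_erase.2 ⟨hjk.symm, mem_univ k⟩
  have hrest : ∀ i ∈ (univ.erase j).erase k,
      angularForm (transitionMap j k z i) (fderiv ℝ (transitionMap j k) z v i) =
        angularForm (z i) (v i) - normSq (z i) * angularForm (z k) (v k) / normSq (z k) :=
    fun i hi => angularForm_transitionMap_of_ne (mem_erase.1 hi).1
      (mem_erase.1 (mem_erase.1 hi).2).1 hzk hz v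
  rw [← add_sum_erase _ _ hj, erase_right_comm, angularForm_transitionMap_self hjk hzk hz,
    sum_congr rfl hrest, sum_sub_distrib, ← sum_div, ← sum_mul,
    ← add_sum_erase _ (fun p => normSq (z p)) hk,
    ← add_sum_erase _ (fun i => angularForm (z i) (v i)) hk]
  have hN := normSq_pos.2 hzk
  field_simp
  ring

end Transition

theorem stmt_14_general (n : ℕ) (j k : Fin n) (hjk : j ≠ k)
    (W : (Fin n → ℂ) → (Fin n → ℂ))
    (hW : ∀ z i, W z i = if i = k then 0
        else if i = j then (starRingEnd ℂ (z k) / (‖z k‖ : ℂ)) *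
          ((Real.sqrt (1 - ∑ p ∈ Finset.univ.erase j, Complex.normSq (z p)) : ℝ) : ℂ)
        else z i * (starRingEnd ℂ (z k) / (‖z k‖ : ℂ)))
    (z : Fin n → ℂ)
    (hz : ∑ p ∈ Finset.univ.erase j, Complex.normSq (z p) < 1)
    (hzk : z k ≠ 0)
    (s : ℝ) (v : Fin n → ℂ)
    (w : Fin n → ℂ) (hw : w = W z)
    (v' : Fin n → ℂ) (hv' : v' = (fderiv ℝ W z) v)
    (s' : ℝ)
    (hs' : s' = s + ((z k).re * (v k).im - (z k).im * (v k).re) / Complex.normSq (z k)) :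
    (1 / 2) * (s' + ∑ i ∈ Finset.univ.erase k,
        ((w i).re * (v' i).im - (w i).im * (v' i).re))
      = (1 / 2) * (s + ∑ i ∈ Finset.univ.erase j,
        ((z i).re * (v i).im - (z i).im * (v i).re)) := by
  obtain rfl : W = transitionMap j k := funext fun y => funext (hW y)
  have h := sum_angularForm_transitionMap hjk hzk hz v
  simp only [angularForm] at h
  rw [hs', hw, hv', h]
  ring

/-- The transition maps of the hemispherical trivializations preserve the
connection form: `Ψₖⱼ*((1/2)(dt − τₖ)) = (1/2)(dt − τⱼ)` on `(Bⱼ∖{zₖ=0}) × S¹`, where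
`τ_l = −Σ_{i≠l}(xᵢdyᵢ − yᵢdxᵢ)`.  Concretely, the base part of `Ψₖⱼ` is the map `W`
(multiplication of each coordinate by `z̄ₖ/|zₖ|`, `j`-slot `(z̄ₖ/|zₖ|)√(1−|z|²)`, `k`-slot
dropped) and the circle part is `t ↦ t + θₖ`, whose differential sends a tangent vector
`(v, s)` to `(v', s')` with `v' = DW(z)v` and
`s' = s + dθₖ(v) = s + ((z k).re (v k).im − (z k).im (v k).re)/|zₖ|²`.  The claim is
`(1/2)(s' − τₖ(w)(v')) = (1/2)(s − τⱼ(z)(v))`. -/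
theorem stmt_14 (n : ℕ) (j k : Fin n) (hjk : j ≠ k)
    (W : (Fin n → ℂ) → (Fin n → ℂ))
    (hW : ∀ z i, W z i = if i = k then 0
        else if i = j then (starRingEnd ℂ (z k) / (‖z k‖ : ℂ)) *
          ((Real.sqrt (1 - ∑ p ∈ Finset.univ.erase j, Complex.normSq (z p)) : ℝ) : ℂ)
        else z i * (starRingEnd ℂ (z k) / (‖z k‖ : ℂ)))
    (z : Fin n → ℂ) (hzj : z j = 0)
    (hz : ∑ p ∈ Finset.univ.erase j, Complex.normSq (z p) < 1)
    (hzk : z k ≠ 0)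
    (t s : ℝ) (v : Fin n → ℂ) (hvj : v j = 0)
    (w : Fin n → ℂ) (hw : w = W z)
    (v' : Fin n → ℂ) (hv' : v' = (fderiv ℝ W z) v)
    (s' : ℝ)
    (hs' : s' = s + ((z k).re * (v k).im - (z k).im * (v k).re) / Complex.normSq (z k)) :
    (1 / 2) * (s' + ∑ i ∈ Finset.univ.erase k,
        ((w i).re * (v' i).im - (w i).im * (v' i).re))
      = (1 / 2) * (s + ∑ i ∈ Finset.univ.erase j,
        ((z i).re * (v i).im - (z i).im * (v i).re)) :=
  stmt_14_general n j k hjk W hW z hz hzk s v w hw v' hv' s' hs'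
end

section
/- Let f: Σⁿ⁻¹ → Bⁿ⁻¹ ⊂ ℂⁿ⁻¹ be a Lagrangian immersion into the open unit ball (f*ω₀ = 0) with τ = −Σᵢ(xᵢdyᵢ − yᵢdxᵢ), satisfying ∫_{f(γ)} τ ∈ 2πℤ for all [γ] ∈ H₁(Σ;ℤ). Then the map f̃: Σ → S^{2n−1} ⊂ ℂⁿ given by f̃(x) = e^{it(x)}(f₁(x),...,f_{n−1}(x), √(1−|f(x)|²)), where t(x) = ∫_{f(γ_x)} τ for a path γ_x from a basepoint to x, is a well-defined Legendrian immersion with respect to α = (1/2)Σᵢ₌₁ⁿ(xᵢdyᵢ − yᵢdxᵢ)|_{S^{2n−1}}, i.e., f̃*α = 0. -/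
open Real intervalIntegral
open scoped Manifold

/-- The lifted map of Theorem A, written along a curve `σ` in `Σ`: the `i`-th component of
`f̃ ∘ σ` is `u ↦ c(σ u) · (f(σ u)ᵢ` for `i < n−1`, and `c(σ u) · √(1−|f(σ u)|²)` for
`i = n−1)`, where `c = e^{it}` is the lifted phase. -/
noncomputable def liftAlongCurve {M : Type*} (n : ℕ) (c : M → ℂ)
    (f : M → Fin (n - 1) → ℂ) (σ : ℝ → M) (i : Fin n) : ℝ → ℂ :=
  fun u => c (σ u) *
    (if h : (i : ℕ) < n - 1 then f (σ u) ⟨i, h⟩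
      else ((Real.sqrt (1 - ∑ k, Complex.normSq (f (σ u) k)) : ℝ) : ℂ))

/-! The loop condition makes `exp (i ∫_γ τ)` independent of the smooth curve `γ` from `x₀`,
which defines the phase `c = e^{it}`; along any curve `σ` the fundamental theorem of calculus
gives `(c ∘ σ)' = i τ(σ') (c ∘ σ)`. For `f̃ = c h` with `h = (f, √(1 − |f|²))` and `|c| = 1`,
`2α(f̃') = τ |h|² + Σ ω₀(hᵢ, hᵢ') = τ + (−τ) = 0`, because the last component of `h` is
real. -/

open scoped ContDiff Topology
open Set

/-- `ω₀(z, w)` for the standard symplectic form `ω₀ = dx ∧ dy` on `ℂ`. -/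
def stdSymplectic (z w : ℂ) : ℝ := z.re * w.im - z.im * w.re

section TauRate

variable {ι : Type*} [Fintype ι] {g g₁ g₂ : ℝ → ι → ℂ}

/-- `τ = −Σᵢ(xᵢdyᵢ − yᵢdxᵢ)` evaluated on the velocity of the curve `g` at time `s`. -/
noncomputable def tauRate (g : ℝ → ι → ℂ) (s : ℝ) : ℝ :=
  -∑ i, stdSymplectic (g s i) (deriv g s i)

noncomputable def tauIntegral (g : ℝ → ι → ℂ) : ℝ :=
  ∫ s in (0 : ℝ)..1, tauRate g s

theorem continuous_tauRate (hg : ContDiff ℝ 1 g) : Continuous (tauRate g) := by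
  have hg' : Continuous g := hg.continuous
  have hd : Continuous (deriv g) := hg.continuous_deriv le_rfl
  unfold tauRate stdSymplectic
  fun_prop

theorem tauRate_congr_of_eventuallyEq {s : ℝ} (h : g₁ =ᶠ[𝓝 s] g₂) :
    tauRate g₁ s = tauRate g₂ s := by
  simp only [tauRate, h.eq_of_nhds, h.deriv_eq]

theorem tauRate_comp {φ : ℝ → ℝ} {s : ℝ} (hg : DifferentiableAt ℝ g (φ s))
    (hφ : DifferentiableAt ℝ φ s) :
    tauRate (fun u => g (φ u)) s = deriv φ s * tauRate g (φ s) := by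
  have hderiv : deriv (fun u => g (φ u)) s = deriv φ s • deriv g (φ s) :=
    (hg.hasDerivAt.scomp s hφ.hasDerivAt).deriv
  simp only [tauRate, stdSymplectic, hderiv, Pi.smul_apply, Complex.real_smul,
    Complex.mul_im, Complex.mul_re, Complex.ofReal_re, Complex.ofReal_im, mul_neg,
    Finset.mul_sum]
  congr 1
  exact Finset.sum_congr rfl fun i _ => by ring

theorem integral_tauRate_comp {φ : ℝ → ℝ} (hg : ContDiff ℝ 1 g) (hφ : ContDiff ℝ 1 φ)
    (a b : ℝ) :
    ∫ s in a..b, tauRate (fun u => g (φ u)) s = ∫ s in φ a..φ b, tauRate g s := by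
  have hφd : ∀ x, DifferentiableAt ℝ φ x := hφ.differentiable one_ne_zero
  rw [integral_congr (g := fun s => deriv φ s • (tauRate g ∘ φ) s)
    fun s _ => tauRate_comp (hg.differentiable one_ne_zero _) (hφd s)]
  exact integral_deriv_smul_comp (fun x _ => (hφd x).hasDerivAt)
    (hφ.continuous_deriv le_rfl).continuousOn (continuous_tauRate hg)

end TauRate

/-- Reparametrizing by `flatRamp` makes curves stationary near their endpoints, so that
concatenations of smooth curves are smooth. -/
noncomputable def flatRamp (s : ℝ) : ℝ := smoothTransition (3 * s - 1)

theorem contDiff_flatRamp : ContDiff ℝ ∞ flatRamp :=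
  smoothTransition.contDiff.comp (by fun_prop)

theorem flatRamp_of_le {s : ℝ} (h : s ≤ 1 / 3) : flatRamp s = 0 :=
  smoothTransition.zero_of_nonpos (by linarith)

theorem flatRamp_of_ge {s : ℝ} (h : 2 / 3 ≤ s) : flatRamp s = 1 :=
  smoothTransition.one_of_one_le (by linarith)

@[simp] theorem flatRamp_zero : flatRamp 0 = 0 := flatRamp_of_le (by norm_num)

@[simp] theorem flatRamp_one : flatRamp 1 = 1 := flatRamp_of_ge (by norm_num)

section Curves

variable {X Y : Type*} {γ γ₁ γ₂ : ℝ → X}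

def reverseCurve (γ : ℝ → X) : ℝ → X := fun s => γ (1 - s)

noncomputable def truncateCurve (γ : ℝ → X) (u : ℝ) : ℝ → X := fun s => γ (u * flatRamp s)

noncomputable def transCurve (γ₁ γ₂ : ℝ → X) : ℝ → X :=
  fun s => if s ≤ 1 / 2 then γ₁ (flatRamp (2 * s)) else γ₂ (flatRamp (2 * s - 1))

@[simp] theorem reverseCurve_zero : reverseCurve γ 0 = γ 1 := by simp [reverseCurve]

@[simp] theorem reverseCurve_one : reverseCurve γ 1 = γ 0 := by simp [reverseCurve]

@[simp] theorem truncateCurve_zero (u : ℝ) : truncateCurve γ u 0 = γ 0 := by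
  simp [truncateCurve]

@[simp] theorem truncateCurve_one (u : ℝ) : truncateCurve γ u 1 = γ u := by
  simp [truncateCurve]

@[simp] theorem transCurve_zero : transCurve γ₁ γ₂ 0 = γ₁ 0 := by simp [transCurve]

@[simp] theorem transCurve_one : transCurve γ₁ γ₂ 1 = γ₂ 1 := by norm_num [transCurve]

theorem comp_transCurve (F : X → Y) :
    (fun s => F (transCurve γ₁ γ₂ s)) = transCurve (fun s => F (γ₁ s)) (fun s => F (γ₂ s)) := by
  funext s
  simp only [transCurve, apply_ite F]

theorem transCurve_eq_left (h : γ₁ 1 = γ₂ 0) {s : ℝ} (hs : s < 7 / 12) :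
    transCurve γ₁ γ₂ s = γ₁ (flatRamp (2 * s)) := by
  unfold transCurve
  split_ifs with h'
  · rfl
  · rw [flatRamp_of_le (by linarith), flatRamp_of_ge (by linarith), h]

theorem transCurve_eq_right (h : γ₁ 1 = γ₂ 0) {s : ℝ} (hs : 5 / 12 < s) :
    transCurve γ₁ γ₂ s = γ₂ (flatRamp (2 * s - 1)) := by
  unfold transCurve
  split_ifs with h'
  · rw [flatRamp_of_ge (by linarith), flatRamp_of_le (by linarith), h]
  · rfl

variable {E H : Type*} [NormedAddCommGroup E] [NormedSpace ℝ E] [TopologicalSpace H]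
  {I : ModelWithCorners ℝ E H} [TopologicalSpace X] [ChartedSpace H X]

theorem ContMDiff.comp_contDiff (hγ : ContMDiff 𝓘(ℝ, ℝ) I ∞ γ) {φ : ℝ → ℝ}
    (hφ : ContDiff ℝ ∞ φ) : ContMDiff 𝓘(ℝ, ℝ) I ∞ fun s => γ (φ s) :=
  hγ.comp (contMDiff_iff_contDiff.mpr hφ)

theorem ContMDiff.reverseCurve (hγ : ContMDiff 𝓘(ℝ, ℝ) I ∞ γ) :
    ContMDiff 𝓘(ℝ, ℝ) I ∞ (reverseCurve γ) :=
  hγ.comp_contDiff (by fun_prop)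

theorem ContMDiff.truncateCurve (hγ : ContMDiff 𝓘(ℝ, ℝ) I ∞ γ) (u : ℝ) :
    ContMDiff 𝓘(ℝ, ℝ) I ∞ (truncateCurve γ u) :=
  hγ.comp_contDiff (contDiff_const.mul contDiff_flatRamp)

theorem ContMDiff.transCurve (hγ₁ : ContMDiff 𝓘(ℝ, ℝ) I ∞ γ₁)
    (hγ₂ : ContMDiff 𝓘(ℝ, ℝ) I ∞ γ₂) (h : γ₁ 1 = γ₂ 0) :
    ContMDiff 𝓘(ℝ, ℝ) I ∞ (transCurve γ₁ γ₂) := by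
  intro s
  rcases lt_or_ge s (7 / 12) with hs | hs
  · refine ((hγ₁.comp_contDiff (contDiff_flatRamp.comp (f := fun s => 2 * s) (by fun_prop)))
      s).congr_of_eventuallyEq ?_
    filter_upwards [Iio_mem_nhds hs] with x hx using transCurve_eq_left h hx
  · refine ((hγ₂.comp_contDiff (contDiff_flatRamp.comp (f := fun s => 2 * s - 1) (by fun_prop)))
      s).congr_of_eventuallyEq ?_
    filter_upwards [Ioi_mem_nhds (by linarith : (5 : ℝ) / 12 < s)] with x hx
      using transCurve_eq_right h hx

end Curves

section TauIntegral

variable {ι : Type*} [Fintype ι] {g g₁ g₂ : ℝ → ι → ℂ}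

theorem tauIntegral_reverseCurve (hg : ContDiff ℝ 1 g) :
    tauIntegral (reverseCurve g) = -tauIntegral g := by
  unfold reverseCurve
  rw [tauIntegral, integral_tauRate_comp hg (by fun_prop), tauIntegral, integral_symm]
  norm_num

theorem tauIntegral_truncateCurve (hg : ContDiff ℝ 1 g) (u : ℝ) :
    tauIntegral (truncateCurve g u) = ∫ s in (0 : ℝ)..u, tauRate g s := by
  unfold truncateCurve
  rw [tauIntegral,
    integral_tauRate_comp hg (contDiff_const.mul (contDiff_flatRamp.of_le (by simp)))]
  simp

theorem tauRate_transCurve_of_lt (h : g₁ 1 = g₂ 0) {s : ℝ} (hs : s < 7 / 12) :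
    tauRate (transCurve g₁ g₂) s = tauRate (fun u => g₁ (flatRamp (2 * u))) s :=
  tauRate_congr_of_eventuallyEq <| by
    filter_upwards [Iio_mem_nhds hs] with x hx using transCurve_eq_left h hx

theorem tauRate_transCurve_of_gt (h : g₁ 1 = g₂ 0) {s : ℝ} (hs : 5 / 12 < s) :
    tauRate (transCurve g₁ g₂) s = tauRate (fun u => g₂ (flatRamp (2 * u - 1))) s :=
  tauRate_congr_of_eventuallyEq <| by
    filter_upwards [Ioi_mem_nhds hs] with x hx using transCurve_eq_right h hx

theorem tauIntegral_transCurve (hg₁ : ContDiff ℝ ∞ g₁) (hg₂ : ContDiff ℝ ∞ g₂)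
    (h : g₁ 1 = g₂ 0) :
    tauIntegral (transCurve g₁ g₂) = tauIntegral g₁ + tauIntegral g₂ := by
  have hg : ContDiff ℝ 1 (transCurve g₁ g₂) :=
    (contMDiff_iff_contDiff.mp ((contMDiff_iff_contDiff.mpr hg₁).transCurve
      (contMDiff_iff_contDiff.mpr hg₂) h)).of_le (by simp)
  have hρ : ContDiff ℝ 1 flatRamp := contDiff_flatRamp.of_le (by simp)
  have hleft : ∫ s in (0 : ℝ)..(1 / 2), tauRate (transCurve g₁ g₂) s = tauIntegral g₁ := by
    rw [integral_congr fun s hs => tauRate_transCurve_of_lt h (by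
        rw [uIcc_of_le (by norm_num)] at hs; linarith [hs.2]),
      integral_tauRate_comp (φ := fun u => flatRamp (2 * u)) (hg₁.of_le (by simp))
        (hρ.comp (f := fun u => 2 * u) (by fun_prop))]
    norm_num [tauIntegral]
  have hright : ∫ s in (1 / 2 : ℝ)..1, tauRate (transCurve g₁ g₂) s = tauIntegral g₂ := by
    rw [integral_congr fun s hs => tauRate_transCurve_of_gt h (by
        rw [uIcc_of_le (by norm_num)] at hs; linarith [hs.1]),
      integral_tauRate_comp (φ := fun u => flatRamp (2 * u - 1)) (hg₂.of_le (by simp))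
        (hρ.comp (f := fun u => 2 * u - 1) (by fun_prop))]
    norm_num [tauIntegral]
  have hcont := continuous_tauRate hg
  rw [tauIntegral, ← integral_add_adjacent_intervals (b := 1 / 2)
    (hcont.intervalIntegrable _ _) (hcont.intervalIntegrable _ _), hleft, hright]

end TauIntegral

theorem hasDerivAt_cexp_I_mul_integral {τ : ℝ → ℝ} (hτ : Continuous τ) (a u : ℝ) :
    HasDerivAt (fun v => Complex.exp (Complex.I * (a + ∫ s in (0 : ℝ)..v, τ s : ℝ)))
      (Complex.I * τ u * Complex.exp (Complex.I * (a + ∫ s in (0 : ℝ)..u, τ s : ℝ))) u := by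
  convert ((((hτ.integral_hasStrictDerivAt 0 u).hasDerivAt.const_add a).ofReal_comp).const_mul
    Complex.I).cexp using 1
  ring

theorem Setoid.exists_rep_fixing {α : Type*} (r : Setoid α) (a : α) :
    ∃ b : α → α, (∀ x, r (b x) x) ∧ (∀ x y, r x y → b x = b y) ∧ b a = a := by
  classical
  refine ⟨fun x => if r a x then a else (Quotient.mk r x).out, fun x => ?_, fun x y hxy => ?_,
    by simp⟩
  · dsimp only
    split_ifs with h
    · exact h
    · exact Quotient.mk_out x
  · have hiff : r a x ↔ r a y := ⟨fun h => r.trans h hxy, fun h => r.trans h (r.symm hxy)⟩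
    simp only [hiff, Quotient.sound hxy]

section Phase

variable {E H : Type*} [NormedAddCommGroup E] [NormedSpace ℝ E] [TopologicalSpace H]
  (I : ModelWithCorners ℝ E H) {M : Type*} [TopologicalSpace M] [ChartedSpace H M]

def SmoothJoined (x y : M) : Prop :=
  ∃ γ : ℝ → M, ContMDiff 𝓘(ℝ, ℝ) I ∞ γ ∧ γ 0 = x ∧ γ 1 = y

def smoothJoinedSetoid : Setoid M where
  r := SmoothJoined I
  iseqv :=
    { refl := fun x => ⟨fun _ => x, contMDiff_const, rfl, rfl⟩
      symm := fun ⟨γ, hγ, h0, h1⟩ => ⟨reverseCurve γ, hγ.reverseCurve, by simp [h1], by simp [h0]⟩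
      trans := fun ⟨γ₁, hγ₁, a0, a1⟩ ⟨γ₂, hγ₂, b0, b1⟩ =>
        ⟨transCurve γ₁ γ₂, hγ₁.transCurve hγ₂ (a1.trans b0.symm), by simp [a0], by simp [b1]⟩ }

variable {I} {ι : Type*} [Fintype ι] {f : M → ι → ℂ}

theorem contDiff_comp_of_contMDiff (hf : ContMDiff I 𝓘(ℝ, ι → ℂ) ∞ f) {γ : ℝ → M}
    (hγ : ContMDiff 𝓘(ℝ, ℝ) I ∞ γ) : ContDiff ℝ ∞ fun u => f (γ u) :=
  contMDiff_iff_contDiff.mp (hf.comp hγ)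

theorem tauIntegral_comp_transCurve (hf : ContMDiff I 𝓘(ℝ, ι → ℂ) ∞ f) {γ₁ γ₂ : ℝ → M}
    (hγ₁ : ContMDiff 𝓘(ℝ, ℝ) I ∞ γ₁) (hγ₂ : ContMDiff 𝓘(ℝ, ℝ) I ∞ γ₂) (h : γ₁ 1 = γ₂ 0) :
    tauIntegral (fun u => f (transCurve γ₁ γ₂ u))
      = tauIntegral (fun u => f (γ₁ u)) + tauIntegral (fun u => f (γ₂ u)) := by
  rw [comp_transCurve]
  exact tauIntegral_transCurve (contDiff_comp_of_contMDiff hf hγ₁)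
    (contDiff_comp_of_contMDiff hf hγ₂) (congrArg f h)

/-- Two smooth curves with the same endpoints differ by the loop `γ₁ ⬝ γ₂⁻¹`, whose
`τ`-integral lies in `2πℤ`. -/
theorem cexp_tauIntegral_eq (hf : ContMDiff I 𝓘(ℝ, ι → ℂ) ∞ f)
    (hloop : ∀ γ : ℝ → M, ContMDiff 𝓘(ℝ, ℝ) I ∞ γ → γ 0 = γ 1 →
      ∃ k : ℤ, tauIntegral (fun u => f (γ u)) = 2 * π * k)
    {γ₁ γ₂ : ℝ → M} (hγ₁ : ContMDiff 𝓘(ℝ, ℝ) I ∞ γ₁) (hγ₂ : ContMDiff 𝓘(ℝ, ℝ) I ∞ γ₂)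
    (h0 : γ₁ 0 = γ₂ 0) (h1 : γ₁ 1 = γ₂ 1) :
    Complex.exp (Complex.I * tauIntegral (fun u => f (γ₁ u)))
      = Complex.exp (Complex.I * tauIntegral (fun u => f (γ₂ u))) := by
  have hjoin : γ₁ 1 = reverseCurve γ₂ 0 := by simpa using h1
  obtain ⟨k, hk⟩ := hloop _ (hγ₁.transCurve hγ₂.reverseCurve hjoin) (by simpa using h0)
  rw [tauIntegral_comp_transCurve hf hγ₁ hγ₂.reverseCurve hjoin,
    show (fun u => f (reverseCurve γ₂ u)) = reverseCurve fun u => f (γ₂ u) from rfl,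
    tauIntegral_reverseCurve ((contDiff_comp_of_contMDiff hf hγ₂).of_le (by simp))] at hk
  rw [show tauIntegral (fun u => f (γ₁ u)) = tauIntegral (fun u => f (γ₂ u)) + 2 * π * k by
    linarith, Complex.ofReal_add, mul_add, Complex.exp_add]
  push_cast
  rw [show Complex.I * (2 * π * k) = k * (2 * π * Complex.I) by ring,
    Complex.exp_int_mul_two_pi_mul_I, mul_one]

/-- Each smooth-path component gets a base point, `x₀` on its own, and `c x` is `exp (i ∫ τ)`
along a chosen smooth curve from the base point of `x` to `x`. -/
theorem exists_phase (hf : ContMDiff I 𝓘(ℝ, ι → ℂ) ∞ f)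
    (hloop : ∀ γ : ℝ → M, ContMDiff 𝓘(ℝ, ℝ) I ∞ γ → γ 0 = γ 1 →
      ∃ k : ℤ, tauIntegral (fun u => f (γ u)) = 2 * π * k) (x₀ : M) :
    ∃ c : M → ℂ, (∀ x, ‖c x‖ = 1) ∧
      (∀ x γ, ContMDiff 𝓘(ℝ, ℝ) I ∞ γ → γ 0 = x₀ → γ 1 = x →
        c x = Complex.exp (Complex.I * tauIntegral (fun u => f (γ u)))) ∧
      ∀ σ : ℝ → M, ContMDiff 𝓘(ℝ, ℝ) I ∞ σ → ∀ u,
        HasDerivAt (fun v => c (σ v)) (Complex.I * tauRate (fun v => f (σ v)) u * c (σ u)) u := by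
  obtain ⟨b, hb, hb_eq, hb₀⟩ := (smoothJoinedSetoid I).exists_rep_fixing x₀
  have hb' : ∀ x, SmoothJoined I (b x) x := hb
  choose p hp hp0 hp1 using hb'
  set c : M → ℂ := fun x => Complex.exp (Complex.I * tauIntegral (fun u => f (p x u)))
  have hc : ∀ x γ, ContMDiff 𝓘(ℝ, ℝ) I ∞ γ → γ 0 = b x → γ 1 = x →
      c x = Complex.exp (Complex.I * tauIntegral (fun u => f (γ u))) := fun x γ hγ h0 h1 =>
    cexp_tauIntegral_eq hf hloop (hp x) hγ ((hp0 x).trans h0.symm) ((hp1 x).trans h1.symm)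
  refine ⟨c, fun x => Complex.norm_exp_I_mul_ofReal _, fun x γ hγ h0 h1 =>
    hc x γ hγ (h0.trans (hb₀.symm.trans (hb_eq x₀ x ⟨γ, hγ, h0, h1⟩))) h1, fun σ hσ u => ?_⟩
  have hcσ : ∀ v, c (σ v) = Complex.exp (Complex.I *
      (tauIntegral (fun u => f (p (σ 0) u)) + ∫ s in (0 : ℝ)..v, tauRate (fun u => f (σ u)) s
        : ℝ)) := by
    intro v
    have hjoin : p (σ 0) 1 = truncateCurve σ v 0 := by simp [hp1]
    have hbase : b (σ 0) = b (σ v) :=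
      hb_eq _ _ ⟨truncateCurve σ v, hσ.truncateCurve v, by simp, by simp⟩
    rw [hc (σ v) _ ((hp _).transCurve (hσ.truncateCurve v) hjoin) (by simp [hp0, hbase])
        (by simp), tauIntegral_comp_transCurve hf (hp _) (hσ.truncateCurve v) hjoin,
      show (fun u => f (truncateCurve σ v u)) = truncateCurve (fun u => f (σ u)) v from rfl,
      tauIntegral_truncateCurve ((contDiff_comp_of_contMDiff hf hσ).of_le (by simp))]
  rw [funext hcσ, hcσ u]
  exact hasDerivAt_cexp_I_mul_integral
    (continuous_tauRate ((contDiff_comp_of_contMDiff hf hσ).of_le (by simp))) _ u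

end Phase

theorem stdSymplectic_ofReal (a b : ℝ) : stdSymplectic a b = 0 := by
  simp [stdSymplectic]

theorem stdSymplectic_mul_deriv {c w : ℝ → ℂ} {τ u : ℝ}
    (hc : HasDerivAt c (Complex.I * τ * c u) u) (hw : DifferentiableAt ℝ w u)
    (hnorm : ‖c u‖ = 1) :
    stdSymplectic (c u * w u) (deriv (fun v => c v * w v) u)
      = τ * Complex.normSq (w u) + stdSymplectic (w u) (deriv w u) := by
  have hc2 := Complex.normSq_eq_norm_sq (c u)
  rw [hnorm, Complex.normSq_apply] at hc2
  rw [(hc.fun_mul hw.hasDerivAt).deriv]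
  simp only [stdSymplectic, Complex.normSq_apply, Complex.mul_re, Complex.mul_im,
    Complex.add_re, Complex.add_im, Complex.I_re, Complex.I_im, Complex.ofReal_re,
    Complex.ofReal_im]
  linear_combination (τ * ((w u).re ^ 2 + (w u).im ^ 2)
    + ((w u).re * (deriv w u).im - (w u).im * (deriv w u).re)) * hc2

section Lift

variable {m : ℕ} {M : Type*} (c : M → ℂ) (f : M → Fin m → ℂ) (σ : ℝ → M)

theorem liftAlongCurve_castSucc (j : Fin m) :
    liftAlongCurve (m + 1) c f σ j.castSucc = fun u => c (σ u) * f (σ u) j := by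
  funext u
  simp [liftAlongCurve]

theorem liftAlongCurve_last :
    liftAlongCurve (m + 1) c f σ (Fin.last m)
      = fun u => c (σ u) * ((√(1 - ∑ k, Complex.normSq (f (σ u) k)) : ℝ) : ℂ) := by
  funext u
  simp [liftAlongCurve]

variable {c f σ}

theorem sum_stdSymplectic_liftAlongCurve {u : ℝ}
    (hball : ∑ k, Complex.normSq (f (σ u) k) < 1)
    (hf : DifferentiableAt ℝ (fun v => f (σ v)) u)
    (hc : HasDerivAt (fun v => c (σ v)) (Complex.I * tauRate (fun v => f (σ v)) u * c (σ u)) u)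
    (hnorm : ‖c (σ u)‖ = 1) :
    ∑ i : Fin (m + 1), stdSymplectic (liftAlongCurve (m + 1) c f σ i u)
      (deriv (liftAlongCurve (m + 1) c f σ i) u) = 0 := by
  have hfj : ∀ j, DifferentiableAt ℝ (fun v => f (σ v) j) u := differentiableAt_pi.mp hf
  rw [Fin.sum_univ_castSucc, liftAlongCurve_last]
  simp only [liftAlongCurve_castSucc]
  set r : ℝ → ℝ := fun v => √(1 - ∑ k, Complex.normSq (f (σ v) k))
  have hr : DifferentiableAt ℝ r u := by
    refine ((DifferentiableAt.fun_sum fun k _ => ?_).const_sub 1).sqrt (by linarith)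
    simpa only [Complex.normSq_eq_norm_sq] using DifferentiableAt.norm_sq ℝ (hfj k)
  have hrC : HasDerivAt (fun v => (r v : ℂ)) ((deriv r u : ℝ) : ℂ) u := hr.hasDerivAt.ofReal_comp
  have hr2 : r u * r u = 1 - ∑ k, Complex.normSq (f (σ u) k) := Real.mul_self_sqrt (by linarith)
  rw [Finset.sum_congr rfl fun j _ => stdSymplectic_mul_deriv hc (hfj j) hnorm,
    stdSymplectic_mul_deriv hc hrC.differentiableAt hnorm, hrC.deriv, stdSymplectic_ofReal,
    Finset.sum_add_distrib, ← Finset.mul_sum, Complex.normSq_ofReal, hr2]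
  simp only [tauRate, deriv_pi hfj]
  ring

end Lift

theorem stmt_16_general
    {n : ℕ}
    {M : Type*} [TopologicalSpace M] [ChartedSpace (EuclideanSpace ℝ (Fin (n - 1))) M]
    (f : M → (Fin (n - 1) → ℂ))
    (hf : ContMDiff (𝓡 (n - 1)) 𝓘(ℝ, Fin (n - 1) → ℂ) (⊤ : ℕ∞) f)
    (hball : ∀ x, ∑ i, Complex.normSq (f x i) < 1)
    (x₀ : M)
    (h1 : ∀ γ : ℝ → M, ContMDiff 𝓘(ℝ, ℝ) (𝓡 (n - 1)) (⊤ : ℕ∞) γ → γ 0 = γ 1 →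
      ∃ m : ℤ, (∫ s in (0:ℝ)..1,
        -(∑ i, ((f (γ s) i).re * (deriv (fun u => f (γ u)) s i).im
              - (f (γ s) i).im * (deriv (fun u => f (γ u)) s i).re))) = 2 * π * m) :
    ∃ c : M → ℂ,
      (∀ (x : M) (γ : ℝ → M), ContMDiff 𝓘(ℝ, ℝ) (𝓡 (n - 1)) (⊤ : ℕ∞) γ → γ 0 = x₀ → γ 1 = x →
        c x = Complex.exp (Complex.I * (∫ s in (0:ℝ)..1,
          -(∑ i, ((f (γ s) i).re * (deriv (fun u => f (γ u)) s i).im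
                - (f (γ s) i).im * (deriv (fun u => f (γ u)) s i).re))))) ∧
      (∀ (σ : ℝ → M), ContMDiff 𝓘(ℝ, ℝ) (𝓡 (n - 1)) (⊤ : ℕ∞) σ → ∀ u : ℝ,
        (1 / 2) * ∑ i : Fin n,
          ((liftAlongCurve n c f σ i u).re * (deriv (liftAlongCurve n c f σ i) u).im
            - (liftAlongCurve n c f σ i u).im * (deriv (liftAlongCurve n c f σ i) u).re)
          = 0) := by
  obtain ⟨c, hnorm, hpath, hderiv⟩ := exists_phase hf h1 x₀
  refine ⟨c, hpath, fun σ hσ u => ?_⟩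
  cases n with
  | zero => simp
  | succ m =>
    exact mul_eq_zero_of_right _ (sum_stdSymplectic_liftAlongCurve (hball _)
      ((contDiff_comp_of_contMDiff hf hσ).differentiable (by simp) u) (hderiv σ hσ u) (hnorm _))

/-- Theorem A: Let `f : Σ → Bⁿ⁻¹ ⊂ ℂⁿ⁻¹` be a Lagrangian immersion of a
closed connected `(n−1)`-manifold into the open unit ball (`f*ω₀ = 0`), with
`τ = −Σᵢ(xᵢdyᵢ − yᵢdxᵢ)`, such that `∫_{f(γ)} τ ∈ 2πℤ` for every loop `γ` in `Σ`.  Then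
the phase `e^{it(x)}`, `t(x) = ∫_{f(γₓ)} τ` over any path `γₓ` from a basepoint `x₀` to
`x`, is well defined, and the lift
`f̃(x) = e^{it(x)}(f₁(x),...,f_{n−1}(x), √(1−|f(x)|²)) ∈ S^{2n−1}` is Legendrian with
respect to `α = (1/2)Σᵢ(xᵢdyᵢ − yᵢdxᵢ)|_{S^{2n−1}}`, i.e. `f̃*α = 0`: along every smooth
curve `σ` in `Σ`, `α(d(f̃∘σ)/du) = 0`. -/
theorem stmt_16
    {n : ℕ} (hn : 1 ≤ n)
    {M : Type*} [TopologicalSpace M] [ChartedSpace (EuclideanSpace ℝ (Fin (n - 1))) M]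
    [IsManifold (𝓡 (n - 1)) (⊤ : ℕ∞) M] [CompactSpace M] [ConnectedSpace M]
    (f : M → (Fin (n - 1) → ℂ))
    (hf : ContMDiff (𝓡 (n - 1)) 𝓘(ℝ, Fin (n - 1) → ℂ) (⊤ : ℕ∞) f)
    (hball : ∀ x, ∑ i, Complex.normSq (f x i) < 1)
    (himm : ∀ x, Function.Injective (mfderiv (𝓡 (n - 1)) 𝓘(ℝ, Fin (n - 1) → ℂ) f x))
    (hLag : ∀ (x : M) (u v : EuclideanSpace ℝ (Fin (n - 1))),
      ∑ i, ((mfderiv (𝓡 (n - 1)) 𝓘(ℝ, Fin (n - 1) → ℂ) f x u i).re *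
            (mfderiv (𝓡 (n - 1)) 𝓘(ℝ, Fin (n - 1) → ℂ) f x v i).im
          - (mfderiv (𝓡 (n - 1)) 𝓘(ℝ, Fin (n - 1) → ℂ) f x u i).im *
            (mfderiv (𝓡 (n - 1)) 𝓘(ℝ, Fin (n - 1) → ℂ) f x v i).re) = 0)
    (x₀ : M)
    (h1 : ∀ γ : ℝ → M, ContMDiff 𝓘(ℝ, ℝ) (𝓡 (n - 1)) (⊤ : ℕ∞) γ → γ 0 = γ 1 →
      ∃ m : ℤ, (∫ s in (0:ℝ)..1,
        -(∑ i, ((f (γ s) i).re * (deriv (fun u => f (γ u)) s i).im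
              - (f (γ s) i).im * (deriv (fun u => f (γ u)) s i).re))) = 2 * π * m) :
    ∃ c : M → ℂ,
      (∀ (x : M) (γ : ℝ → M), ContMDiff 𝓘(ℝ, ℝ) (𝓡 (n - 1)) (⊤ : ℕ∞) γ → γ 0 = x₀ → γ 1 = x →
        c x = Complex.exp (Complex.I * (∫ s in (0:ℝ)..1,
          -(∑ i, ((f (γ s) i).re * (deriv (fun u => f (γ u)) s i).im
                - (f (γ s) i).im * (deriv (fun u => f (γ u)) s i).re))))) ∧
      (∀ (σ : ℝ → M), ContMDiff 𝓘(ℝ, ℝ) (𝓡 (n - 1)) (⊤ : ℕ∞) σ → ∀ u : ℝ,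
        (1 / 2) * ∑ i : Fin n,
          ((liftAlongCurve n c f σ i u).re * (deriv (liftAlongCurve n c f σ i) u).im
            - (liftAlongCurve n c f σ i u).im * (deriv (liftAlongCurve n c f σ i) u).re)
          = 0) :=
  stmt_16_general f hf hball x₀ h1
end

section
/- Suppose t: ℝⁿ⁻¹ → ℝ and r: ℝⁿ⁻¹ → (0,∞) satisfy ∂t/∂θⱼ + 3r(θ)² = 0 for j = 1,2 (case n = 3), and s, s₁, s₂: ℝ² → ℝ satisfy ∂s/∂θ₁ + 2r(2s₁+s₂) + 2s₁² + s₂² = 0 and ∂s/∂θ₂ + 2r(s₁+2s₂) + s₁² + 2s₂² = 0. Then the perturbed map with radii rᵢ = r + sᵢ and phase t+s, namely g̃(θ₁,θ₂) = (r₁, 2θ₁+θ₂, r₂, θ₁+2θ₂, t+s) in polar-coordinate notation, satisfies g̃*((1/2)(dt − τ)) = 0, i.e., g̃ is Legendrian. Moreover, given s, the system is solved by s₁ = −r + σ√(r² + (1/3)(∂s/∂θ₂ − 2∂s/∂θ₁)) and s₂ = −r + σ√(r² + (1/3)(∂s/∂θ₁ − 2∂s/∂θ₂)) for σ = ±1 (when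 the radicands are nonnegative). -/
/-- the perturbation lemma, `n = 3`: Suppose `t, r : ℝ² → ℝ` satisfy
`∂t/∂θⱼ + 3r² = 0` for `j = 1,2`, and `s, s₁, s₂` satisfy
`∂s/∂θ₁ + 2r(2s₁+s₂) + 2s₁² + s₂² = 0` and `∂s/∂θ₂ + 2r(s₁+2s₂) + s₁² + 2s₂² = 0`.
Then the perturbed map `g̃ = (r₁, 2θ₁+θ₂, r₂, θ₁+2θ₂, t+s)` with `rᵢ = r + sᵢ` satisfies
`g̃*((1/2)(dt − τ)) = 0` (Legendrian), whose coefficient form is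
`∂(t+s)/∂θ₁ + 2r₁² + r₂² = 0` and `∂(t+s)/∂θ₂ + r₁² + 2r₂² = 0`.
Moreover, given `s`, the system is solved by
`s₁ = −r + σ√(r² + (1/3)(∂s/∂θ₂ − 2∂s/∂θ₁))` and
`s₂ = −r + σ√(r² + (1/3)(∂s/∂θ₁ − 2∂s/∂θ₂))` for `σ = ±1` (radicands nonnegative). -/
theorem stmt_18
    (t r s s₁ s₂ : ℝ × ℝ → ℝ)
    (hr : ∀ p, 0 < r p)
    (ht : ∀ p : ℝ × ℝ,
      deriv (fun u => t (u, p.2)) p.1 + 3 * (r p) ^ 2 = 0 ∧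
      deriv (fun u => t (p.1, u)) p.2 + 3 * (r p) ^ 2 = 0)
    (hs : ∀ p : ℝ × ℝ,
      deriv (fun u => s (u, p.2)) p.1 + 2 * r p * (2 * s₁ p + s₂ p)
        + 2 * (s₁ p) ^ 2 + (s₂ p) ^ 2 = 0 ∧
      deriv (fun u => s (p.1, u)) p.2 + 2 * r p * (s₁ p + 2 * s₂ p)
        + (s₁ p) ^ 2 + 2 * (s₂ p) ^ 2 = 0) :
    (∀ p : ℝ × ℝ,
      deriv (fun u => t (u, p.2)) p.1 + deriv (fun u => s (u, p.2)) p.1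
        + 2 * (r p + s₁ p) ^ 2 + (r p + s₂ p) ^ 2 = 0 ∧
      deriv (fun u => t (p.1, u)) p.2 + deriv (fun u => s (p.1, u)) p.2
        + (r p + s₁ p) ^ 2 + 2 * (r p + s₂ p) ^ 2 = 0) ∧
    (∀ (σ : ℝ) (s₁' s₂' : ℝ × ℝ → ℝ), (σ = 1 ∨ σ = -1) →
      (∀ p : ℝ × ℝ, 0 ≤ (r p) ^ 2 +
        (1 / 3) * (deriv (fun u => s (p.1, u)) p.2 - 2 * deriv (fun u => s (u, p.2)) p.1)) →
      (∀ p : ℝ × ℝ, 0 ≤ (r p) ^ 2 +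
        (1 / 3) * (deriv (fun u => s (u, p.2)) p.1 - 2 * deriv (fun u => s (p.1, u)) p.2)) →
      (∀ p, s₁' p = -(r p) + σ * Real.sqrt ((r p) ^ 2 +
        (1 / 3) * (deriv (fun u => s (p.1, u)) p.2 - 2 * deriv (fun u => s (u, p.2)) p.1))) →
      (∀ p, s₂' p = -(r p) + σ * Real.sqrt ((r p) ^ 2 +
        (1 / 3) * (deriv (fun u => s (u, p.2)) p.1 - 2 * deriv (fun u => s (p.1, u)) p.2))) →
      ∀ p : ℝ × ℝ,
        deriv (fun u => s (u, p.2)) p.1 + 2 * r p * (2 * s₁' p + s₂' p)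
          + 2 * (s₁' p) ^ 2 + (s₂' p) ^ 2 = 0 ∧
        deriv (fun u => s (p.1, u)) p.2 + 2 * r p * (s₁' p + 2 * s₂' p)
          + (s₁' p) ^ 2 + 2 * (s₂' p) ^ 2 = 0) := by
  refine ⟨fun p => ⟨by linear_combination (ht p).1 + (hs p).1,
      by linear_combination (ht p).2 + (hs p).2⟩, ?_⟩
  intro σ s₁' s₂' hσ h1 h2 e1 e2 p
  have hσ2 : σ ^ 2 = 1 := by rcases hσ with h | h <;> simp [h]
  have q1 : (s₁' p + r p) ^ 2 = (r p) ^ 2 +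
      (1 / 3) * (deriv (fun u => s (p.1, u)) p.2 - 2 * deriv (fun u => s (u, p.2)) p.1) := by
    rw [e1 p]
    have h := Real.sq_sqrt (h1 p)
    nlinarith [h, hσ2]
  have q2 : (s₂' p + r p) ^ 2 = (r p) ^ 2 +
      (1 / 3) * (deriv (fun u => s (u, p.2)) p.1 - 2 * deriv (fun u => s (p.1, u)) p.2) := by
    rw [e2 p]
    have h := Real.sq_sqrt (h2 p)
    nlinarith [h, hσ2]
  exact ⟨by linear_combination 2 * q1 + q2, by linear_combination q1 + 2 * q2⟩
end

section
/- With r(θ₁,θ₂) = δ + ε sin(θ₁+θ₂) and the choice s(θ₁,θ₂) = ε sin(θ₁), the solutions of the perturbation system are r₁ = √(r² − (2/3)ε cos θ₁) and r₂ = √(r² + (1/3)ε cos θ₁); i.e., s₁ = −r + √(r² − (2/3)ε cos θ₁) and s₂ = −r + √(r² + (1/3)ε cos θ₁) satisfy ∂s/∂θ₁ + 2r(2s₁+s₂) + 2s₁² + s₂² = 0 and ∂s/∂θ₂ + 2r(s₁+2s₂) + s₁² + 2s₂² = 0. -/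
/-- With `r(θ₁,θ₂) = δ + ε sin(θ₁+θ₂)` and the choice `s(θ₁,θ₂) = ε sin θ₁`,
the functions `s₁ = −r + √(r² − (2/3)ε cos θ₁)` and `s₂ = −r + √(r² + (1/3)ε cos θ₁)`
(radicands positive) solve the perturbation system:
`∂s/∂θ₁ + 2r(2s₁+s₂) + 2s₁² + s₂² = 0` and `∂s/∂θ₂ + 2r(s₁+2s₂) + s₁² + 2s₂² = 0`. -/
theorem stmt_19 (δ ε : ℝ) (hδ : 0 < δ) (hε : 0 < ε)
    (r s s₁ s₂ : ℝ × ℝ → ℝ)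
    (hr : ∀ p : ℝ × ℝ, r p = δ + ε * Real.sin (p.1 + p.2))
    (hs : ∀ p : ℝ × ℝ, s p = ε * Real.sin p.1)
    (h₁pos : ∀ p : ℝ × ℝ, 0 < (r p) ^ 2 - (2 / 3) * ε * Real.cos p.1)
    (h₂pos : ∀ p : ℝ × ℝ, 0 < (r p) ^ 2 + (1 / 3) * ε * Real.cos p.1)
    (hs₁ : ∀ p, s₁ p = -(r p) + Real.sqrt ((r p) ^ 2 - (2 / 3) * ε * Real.cos p.1))
    (hs₂ : ∀ p, s₂ p = -(r p) + Real.sqrt ((r p) ^ 2 + (1 / 3) * ε * Real.cos p.1)) :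
    ∀ p : ℝ × ℝ,
      deriv (fun u => s (u, p.2)) p.1 + 2 * r p * (2 * s₁ p + s₂ p)
        + 2 * (s₁ p) ^ 2 + (s₂ p) ^ 2 = 0 ∧
      deriv (fun u => s (p.1, u)) p.2 + 2 * r p * (s₁ p + 2 * s₂ p)
        + (s₁ p) ^ 2 + 2 * (s₂ p) ^ 2 = 0 := by

  intro p
  have hd1 : deriv (fun u => s (u, p.2)) p.1 = ε * Real.cos p.1 := by
    have : (fun u => s (u, p.2)) = fun u => ε * Real.sin u := by
      funext u; rw [hs]
    rw [this]
    simp [Real.deriv_sin]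
  have hd2 : deriv (fun u => s (p.1, u)) p.2 = 0 := by
    have : (fun u => s (p.1, u)) = fun _ => ε * Real.sin p.1 := by
      funext u; rw [hs]
    rw [this, deriv_const]
  have ha : Real.sqrt ((r p) ^ 2 - (2 / 3) * ε * Real.cos p.1) ^ 2
      = (r p) ^ 2 - (2 / 3) * ε * Real.cos p.1 :=
    Real.sq_sqrt (h₁pos p).le
  have hb : Real.sqrt ((r p) ^ 2 + (1 / 3) * ε * Real.cos p.1) ^ 2
      = (r p) ^ 2 + (1 / 3) * ε * Real.cos p.1 :=
    Real.sq_sqrt (h₂pos p).le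
  constructor
  · rw [hd1, hs₁ p, hs₂ p]; nlinarith [ha, hb]
  · rw [hd2, hs₁ p, hs₂ p]; nlinarith [ha, hb]
end
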